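/- arXiv:2605.25635 — 3 statements merged into one kernel-verified Lean document; each statement's English description precedes it below -/
import Mathlib

section
/- Let X be a nonempty compact polytope in R^d, C ⊆ R^d nonempty, and X*(C) the union over c∈C of argmin_{x∈X} c^T x. If an affine subspace V is exact-sketching on C, then the span of all differences x−x' with x,x' ∈ X*(C) is contained in the direction space of V, and V ∩ X*(C) is nonempty. -/
/-- The set of minimizers of `f` over `X`. -/
def argminOn {α : Type*} (f : α → ℝ) (X : Set α) : Set α :=
  {x ∈ X | ∀ y ∈ X, f x ≤ f y}

/-- The linear objective `x ↦ cᵀ x`. -/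
def dotObj {d : ℕ} (c : Fin d → ℝ) : (Fin d → ℝ) → ℝ :=
  fun x => ∑ i, c i * x i

lemma argminOn_nonempty {d : ℕ} (c : Fin d → ℝ) (X : Set (Fin d → ℝ))
    (hXne : X.Nonempty) (hXcomp : IsCompact X) : (argminOn (dotObj c) X).Nonempty := by
  have hcont : Continuous (dotObj c) := by
    unfold dotObj
    exact continuous_finset_sum _ fun i _ => (continuous_const.mul (continuous_apply i))
  obtain ⟨x, hxX, hmin⟩ := hXcomp.exists_isMinOn hXne hcont.continuousOn
  exact ⟨x, hxX, fun y hy => hmin hy⟩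

theorem stmt_1 {d : ℕ} (X C : Set (Fin d → ℝ))
    (hXne : X.Nonempty) (hXcomp : IsCompact X)
    (hXpoly : ∃ s : Finset (Fin d → ℝ), X = convexHull ℝ (s : Set (Fin d → ℝ)))
    (hCne : C.Nonempty)
    (V : AffineSubspace ℝ (Fin d → ℝ))
    (hsketch : ∀ c ∈ C,
      argminOn (dotObj c) (X ∩ (V : Set (Fin d → ℝ))) = argminOn (dotObj c) X) :
    Submodule.span ℝ {v : Fin d → ℝ |
        ∃ x ∈ ⋃ c ∈ C, argminOn (dotObj c) X, ∃ x' ∈ ⋃ c ∈ C, argminOn (dotObj c) X,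
          v = x - x'} ≤ V.direction ∧
      ((V : Set (Fin d → ℝ)) ∩ ⋃ c ∈ C, argminOn (dotObj c) X).Nonempty := by
  have hsub : ∀ c ∈ C, argminOn (dotObj c) X ⊆ (V : Set (Fin d → ℝ)) := by
    intro c hc x hx
    rw [← hsketch c hc] at hx
    exact hx.1.2
  have hUsub : (⋃ c ∈ C, argminOn (dotObj c) X) ⊆ (V : Set (Fin d → ℝ)) := by
    intro x hx
    simp only [Set.mem_iUnion] at hx
    obtain ⟨c, hc, hx⟩ := hx
    exact hsub c hc hx
  constructor
  · rw [Submodule.span_le]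
    rintro v ⟨x, hx, x', hx', rfl⟩
    have := AffineSubspace.vsub_mem_direction (hUsub hx) (hUsub hx')
    simpa using this
  · obtain ⟨c, hc⟩ := hCne
    obtain ⟨x, hx⟩ := argminOn_nonempty c X hXne hXcomp
    exact ⟨x, hUsub (Set.mem_biUnion hc hx), Set.mem_biUnion hc hx⟩
end

section
/- Let X be a nonempty compact polytope in R^d, C ⊆ R^d nonempty, and suppose every extreme point of every optimal face argmin_{x∈X} c^T x (c ∈ C) belongs to X*(C). If an affine subspace V satisfies dir(X*(C)) ⊆ dir(V) and V ∩ X*(C) ≠ ∅, then V is exact-sketching on C: for every c∈C, argmin_{x∈X∩V} c^T x = argmin_{x∈X} c^T x. -/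
/-!
The optimal face `F = X*(c)` is an exposed face of the polytope `X`, so its extreme points are
among the finitely many vertices of `X`, and by Krein–Milman `F` is their convex hull. These
extreme points lie in `X*(C)`, which lies in `V` because it contains a point of `V` and its
differences lie in `dir V`. Hence `F ⊆ V`, and minimizing over `X ∩ V` loses no minimizer.
-/

theorem argminOn_inter_eq_of_subset {α : Type*} {f : α → ℝ} {X W : Set α}
    (hne : (argminOn f X).Nonempty) (hsub : argminOn f X ⊆ W) :
    argminOn f (X ∩ W) = argminOn f X := by
  obtain ⟨w, hw⟩ := hne
  ext x
  constructor
  · rintro ⟨⟨hxX, -⟩, hxmin⟩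
    exact ⟨hxX, fun y hy => (hxmin w ⟨hw.1, hsub hw⟩).trans (hw.2 y hy)⟩
  · intro hx
    exact ⟨⟨hx.1, hsub hx⟩, fun y hy => hx.2 y hy.1⟩

theorem IsCompact.argminOn_nonempty {α : Type*} [TopologicalSpace α] {f : α → ℝ} {X : Set α}
    (hX : IsCompact X) (hXne : X.Nonempty) (hf : ContinuousOn f X) :
    (argminOn f X).Nonempty :=
  let ⟨x, hxX, hxmin⟩ := hX.exists_isMinOn hXne hf
  ⟨x, hxX, fun _ hy => hxmin hy⟩

theorem IsExposed.convexHull_extremePoints_eq_of_convexHull_finset {E : Type*} [AddCommGroup E]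
    [Module ℝ E] [TopologicalSpace E] [T2Space E] [IsTopologicalAddGroup E] [ContinuousSMul ℝ E]
    [LocallyConvexSpace ℝ E] {s : Finset E} {F : Set E}
    (hF : IsExposed ℝ (convexHull ℝ (s : Set E)) F) :
    convexHull ℝ (F.extremePoints ℝ) = F := by
  have hcompact : IsCompact F := hF.isCompact (s.finite_toSet.isCompact_convexHull ℝ)
  have hfinite : (F.extremePoints ℝ).Finite :=
    s.finite_toSet.subset
      (hF.isExtreme.extremePoints_subset_extremePoints.trans extremePoints_convexHull_subset)
  rw [← (hfinite.isClosed_convexHull (𝕜 := ℝ)).closure_eq]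
  exact closure_convexHull_extremePoints hcompact (hF.convex (convex_convexHull ℝ _))

noncomputable def dotObjCLM {d : ℕ} (c : Fin d → ℝ) : StrongDual ℝ (Fin d → ℝ) :=
  LinearMap.toContinuousLinearMap (dotProductBilin ℝ ℝ c)

theorem dotObjCLM_apply {d : ℕ} (c x : Fin d → ℝ) : dotObjCLM c x = dotObj c x := rfl

theorem continuous_dotObj {d : ℕ} (c : Fin d → ℝ) : Continuous (dotObj c) :=
  (dotObjCLM c).continuous

theorem argminOn_dotObj_eq_toExposed {d : ℕ} (c : Fin d → ℝ) (X : Set (Fin d → ℝ)) :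
    argminOn (dotObj c) X = (-dotObjCLM c).toExposed X := by
  ext x
  simp [argminOn, ContinuousLinearMap.toExposed, dotObjCLM_apply]

theorem isExposed_argminOn_dotObj {d : ℕ} (c : Fin d → ℝ) (X : Set (Fin d → ℝ)) :
    IsExposed ℝ X (argminOn (dotObj c) X) :=
  argminOn_dotObj_eq_toExposed c X ▸ ContinuousLinearMap.toExposed.isExposed

theorem stmt_4_general {d : ℕ} (X C : Set (Fin d → ℝ))
    (hXne : X.Nonempty) (hXcomp : IsCompact X)
    (hXpoly : ∃ s : Finset (Fin d → ℝ), X = convexHull ℝ (s : Set (Fin d → ℝ)))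
    (hext : ∀ c ∈ C,
      Set.extremePoints ℝ (argminOn (dotObj c) X) ⊆ ⋃ c' ∈ C, argminOn (dotObj c') X)
    (V : AffineSubspace ℝ (Fin d → ℝ))
    (hdir : Submodule.span ℝ {v : Fin d → ℝ |
        ∃ x ∈ ⋃ c ∈ C, argminOn (dotObj c) X, ∃ x' ∈ ⋃ c ∈ C, argminOn (dotObj c) X,
          v = x - x'} ≤ V.direction)
    (hmeet : ((V : Set (Fin d → ℝ)) ∩ ⋃ c ∈ C, argminOn (dotObj c) X).Nonempty) :
    ∀ c ∈ C,
      argminOn (dotObj c) (X ∩ (V : Set (Fin d → ℝ))) = argminOn (dotObj c) X := by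
  intro c hc
  obtain ⟨p, hpV, hpU⟩ := hmeet
  have hUV : (⋃ c ∈ C, argminOn (dotObj c) X) ⊆ V := fun x hx =>
    (V.vsub_right_mem_direction_iff_mem hpV x).1
      (hdir (Submodule.subset_span ⟨x, hx, p, hpU, rfl⟩))
  refine argminOn_inter_eq_of_subset
    (hXcomp.argminOn_nonempty hXne (continuous_dotObj c).continuousOn) ?_
  obtain ⟨s, rfl⟩ := hXpoly
  rw [← (isExposed_argminOn_dotObj c _).convexHull_extremePoints_eq_of_convexHull_finset]
  exact convexHull_min ((hext c hc).trans hUV) V.convex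

theorem stmt_4 {d : ℕ} (X C : Set (Fin d → ℝ))
    (hXne : X.Nonempty) (hXcomp : IsCompact X)
    (hXpoly : ∃ s : Finset (Fin d → ℝ), X = convexHull ℝ (s : Set (Fin d → ℝ)))
    (hCne : C.Nonempty)
    (hext : ∀ c ∈ C,
      Set.extremePoints ℝ (argminOn (dotObj c) X) ⊆ ⋃ c' ∈ C, argminOn (dotObj c') X)
    (V : AffineSubspace ℝ (Fin d → ℝ))
    (hdir : Submodule.span ℝ {v : Fin d → ℝ |
        ∃ x ∈ ⋃ c ∈ C, argminOn (dotObj c) X, ∃ x' ∈ ⋃ c ∈ C, argminOn (dotObj c) X,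
          v = x - x'} ≤ V.direction)
    (hmeet : ((V : Set (Fin d → ℝ)) ∩ ⋃ c ∈ C, argminOn (dotObj c) X).Nonempty) :
    ∀ c ∈ C,
      argminOn (dotObj c) (X ∩ (V : Set (Fin d → ℝ))) = argminOn (dotObj c) X :=
  stmt_4_general X C hXne hXcomp hXpoly hext V hdir hmeet
end

section
/- Lower bound for homogeneous slices in the box example: let X = [−1,1]², fix z ∈ [−1,1]² and the line L = {λz : λ ∈ R}. Let A ~ Uniform(1, 1+ρ) and B ~ Uniform(−1,1) be independent, and set c = (−A, B). Then E[min_{x ∈ X∩L} cᵀx − min_{x∈X} cᵀx] ≥ 1/2. -/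
/-! The box is the closed unit ball of the sup norm on `ℝ × ℝ`, so for the cost `c = (-a, b)` its
minimum is `-(|a| + |b|)`, while on the line through `z` it is `-|c ⬝ z| / ‖z‖`. Pairing `b` with
`-b` and using `|p + q| + |p - q| = 2 max (|p|, |q|)` gives `|c ⬝ z| + |c' ⬝ z| ≤ 2 a ‖z‖` for
`c' = (-a, -b)` whenever `|b| ≤ a`. Hence for every `a ≥ 1` the gap between the two minima, averaged
over `b ∈ [-1, 1]`, is at least the average of `|b|`, namely `1 / 2`. -/

open MeasureTheory Set Metric

theorem isLeast_image_mul_Icc (c r : ℝ) (hr : 0 ≤ r) :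
    IsLeast ((fun l => l * c) '' Icc (-r) r) (-(r * |c|)) := by
  refine ⟨⟨if 0 ≤ c then -r else r, by split_ifs <;> constructor <;> linarith, ?_⟩, ?_⟩
  · split_ifs with hc
    · simp [abs_of_nonneg hc]
    · simp [abs_of_neg (not_le.mp hc)]
  · rintro _ ⟨l, hl, rfl⟩
    calc -(r * |c|) ≤ -(|l| * |c|) := by gcongr; exact abs_le.mpr hl
      _ = -|l * c| := by rw [abs_mul]
      _ ≤ l * c := neg_abs_le _

theorem Icc_neg_one_one_prod_eq_closedBall :
    Icc ((-1 : ℝ), (-1 : ℝ)) (1, 1) = closedBall (0 : ℝ × ℝ) 1 := by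
  rw [← Icc_prod_Icc, ← closedBall_prod_same]
  simp only [Prod.fst_zero, Prod.snd_zero, Real.closedBall_eq_Icc, zero_sub, zero_add]

theorem isLeast_image_closedBall_prod (c₁ c₂ : ℝ) :
    IsLeast ((fun x : ℝ × ℝ => c₁ * x.1 + c₂ * x.2) '' closedBall 0 1) (-|c₁| - |c₂|) := by
  obtain ⟨⟨l₁, hl₁, e₁⟩, low₁⟩ := isLeast_image_mul_Icc c₁ 1 zero_le_one
  obtain ⟨⟨l₂, hl₂, e₂⟩, low₂⟩ := isLeast_image_mul_Icc c₂ 1 zero_le_one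
  rw [← Icc_neg_one_one_prod_eq_closedBall, ← Icc_prod_Icc]
  refine ⟨⟨(l₁, l₂), ⟨hl₁, hl₂⟩, ?_⟩, ?_⟩
  · simp only at e₁ e₂ ⊢
    linarith
  · rintro _ ⟨x, ⟨hx₁, hx₂⟩, rfl⟩
    have h₁ := low₁ ⟨x.1, hx₁, rfl⟩
    have h₂ := low₂ ⟨x.2, hx₂, rfl⟩
    simp only at h₁ h₂ ⊢
    linarith

theorem closedBall_inter_line_eq {E : Type*} [NormedAddCommGroup E] [NormedSpace ℝ E]
    {z : E} (hz : z ≠ 0) :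
    closedBall 0 1 ∩ {x | ∃ l : ℝ, x = l • z} = (· • z) '' Icc (-‖z‖⁻¹) ‖z‖⁻¹ := by
  have hmem : ∀ l : ℝ, ‖l • z‖ ≤ 1 ↔ l ∈ Icc (-‖z‖⁻¹) ‖z‖⁻¹ := fun l => by
    rw [mem_Icc, ← abs_le, norm_smul, Real.norm_eq_abs, ← le_div_iff₀ (norm_pos_iff.mpr hz),
      one_div]
  ext x
  constructor
  · rintro ⟨hx, l, rfl⟩
    exact ⟨l, (hmem l).mp (mem_closedBall_zero_iff.mp hx), rfl⟩
  · rintro ⟨l, hl, rfl⟩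
    exact ⟨mem_closedBall_zero_iff.mpr ((hmem l).mpr hl), l, rfl⟩

theorem isLeast_image_closedBall_inter_line {E : Type*} [NormedAddCommGroup E]
    [NormedSpace ℝ E] (f : E → ℝ) (z : E) (hf : ∀ l : ℝ, f (l • z) = l * f z) :
    IsLeast (f '' (closedBall 0 1 ∩ {x | ∃ l : ℝ, x = l • z})) (-(|f z| / ‖z‖)) := by
  rcases eq_or_ne z 0 with rfl | hz
  · have hf₀ : f 0 = 0 := by simpa using hf 0
    rw [norm_zero, div_zero, neg_zero]
    refine ⟨⟨0, ⟨mem_closedBall_self zero_le_one, 0, (smul_zero _).symm⟩, hf₀⟩, ?_⟩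
    rintro _ ⟨_, ⟨-, l, rfl⟩, rfl⟩
    rw [smul_zero, hf₀]
  · rw [closedBall_inter_line_eq hz, image_image, ← inv_mul_eq_div]
    simp_rw [hf]
    exact isLeast_image_mul_Icc (f z) ‖z‖⁻¹ (by positivity)

theorem intervalIntegral.integral_symmetric_eq_integral_add_comp_neg {E : Type*}
    [NormedAddCommGroup E] [NormedSpace ℝ E] {f : ℝ → E} {r : ℝ}
    (hf : IntervalIntegrable f volume (-r) r) :
    ∫ x in -r..r, f x = ∫ x in 0..r, (f x + f (-x)) := by
  have h₀ : (0 : ℝ) ∈ uIcc (-r) r := by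
    rcases le_total 0 r with h | h <;> simp [h]
  have hneg : IntervalIntegrable f volume (-r) 0 := hf.mono_set (uIcc_subset_uIcc_left h₀)
  have hpos : IntervalIntegrable f volume 0 r := hf.mono_set (uIcc_subset_uIcc_right h₀)
  rw [← integral_add_adjacent_intervals hneg hpos, integral_add hpos, integral_comp_neg, neg_zero,
    add_comm]
  simpa using ((IntervalIntegrable.iff_comp_neg).mp hneg).symm

theorem abs_add_add_abs_sub {α : Type*} [CommRing α] [LinearOrder α] [IsStrictOrderedRing α]
    (p q : α) :
    |p + q| + |p - q| = 2 * max |p| |q| := by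
  rcases abs_cases (p + q) with h₁ | h₁ <;> rcases abs_cases (p - q) with h₂ | h₂ <;>
    rcases abs_cases p with hp | hp <;> rcases abs_cases q with hq | hq <;>
    rcases max_cases |p| |q| with hm | hm <;> linarith

theorem abs_add_abs_le_two_mul_norm (z : ℝ × ℝ) {a b : ℝ} (hb : |b| ≤ a) :
    |-a * z.1 + b * z.2| + |-a * z.1 + -b * z.2| ≤ 2 * a * ‖z‖ := by
  have ha : 0 ≤ a := (abs_nonneg b).trans hb
  have h₁ : |-a * z.1| ≤ a * ‖z‖ := by
    rw [abs_mul, abs_neg, abs_of_nonneg ha]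
    exact mul_le_mul_of_nonneg_left (norm_fst_le z) ha
  have h₂ : |b * z.2| ≤ a * ‖z‖ := by
    rw [abs_mul]
    exact mul_le_mul hb (norm_snd_le z) (abs_nonneg _) ha
  rw [neg_mul b, ← sub_eq_add_neg, abs_add_add_abs_sub, mul_assoc]
  gcongr
  exact max_le h₁ h₂

theorem one_le_integral_slice_gap (z : ℝ × ℝ) {a : ℝ} (ha : 1 ≤ a) :
    1 ≤ ∫ b in (-1 : ℝ)..1, (-(|-a * z.1 + b * z.2| / ‖z‖) - (-|-a| - |b|)) := by
  set g := fun b : ℝ => -(|-a * z.1 + b * z.2| / ‖z‖) - (-|-a| - |b|) with hg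
  have hg_cont : Continuous g := by fun_prop
  have hsym : ∀ b ∈ Icc (0 : ℝ) 1, 2 * b ≤ g b + g (-b) := by
    intro b hb
    have hba : |b| ≤ a := by rw [abs_of_nonneg hb.1]; linarith [hb.2]
    have hsum := div_le_of_le_mul₀ (norm_nonneg z) (by linarith)
      (abs_add_abs_le_two_mul_norm z hba)
    simp only [hg, abs_neg, abs_of_nonneg hb.1, abs_of_nonneg (zero_le_one.trans ha)]
    rw [add_div] at hsum
    linarith
  calc (1 : ℝ) = ∫ b in (0 : ℝ)..1, 2 * b := by
        rw [intervalIntegral.integral_const_mul, integral_id]; norm_num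
    _ ≤ ∫ b in (0 : ℝ)..1, (g b + g (-b)) :=
      intervalIntegral.integral_mono_on zero_le_one
        ((continuous_const_mul 2).intervalIntegrable _ _)
        ((hg_cont.add (hg_cont.comp continuous_neg)).intervalIntegrable _ _) hsym
    _ = ∫ b in (-1 : ℝ)..1, g b :=
      (intervalIntegral.integral_symmetric_eq_integral_add_comp_neg
        (hg_cont.intervalIntegrable _ _)).symm

theorem stmt_15_general (ρ : ℝ) (hρ : 0 < ρ) (z : ℝ × ℝ)
    (X : Set (ℝ × ℝ)) (hX : X = Set.Icc ((-1 : ℝ), (-1 : ℝ)) (1, 1))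
    (L : Set (ℝ × ℝ)) (hL : L = {x : ℝ × ℝ | ∃ l : ℝ, x = l • z}) :
    (1 / (2 * ρ)) *
        ∫ a in Set.Ioo (1 : ℝ) (1 + ρ), ∫ b in Set.Ioo (-1 : ℝ) 1,
          (sInf ((fun x : ℝ × ℝ => -a * x.1 + b * x.2) '' (X ∩ L)) -
            sInf ((fun x : ℝ × ℝ => -a * x.1 + b * x.2) '' X))
      ≥ 1 / 2 := by
  subst hX hL
  have hslice (a b : ℝ) := (isLeast_image_closedBall_inter_line
    (fun x : ℝ × ℝ => -a * x.1 + b * x.2) z fun l => by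
      simp only [Prod.smul_fst, Prod.smul_snd, smul_eq_mul]; ring).csInf_eq
  have hbox (a b : ℝ) := (isLeast_image_closedBall_prod (-a) b).csInf_eq
  rw [Icc_neg_one_one_prod_eq_closedBall]
  simp_rw [hslice, hbox, ← integral_Ioc_eq_integral_Ioo,
    ← intervalIntegral.integral_of_le (by linarith : (1 : ℝ) ≤ 1 + ρ),
    ← intervalIntegral.integral_of_le (by norm_num : (-1 : ℝ) ≤ 1)]
  have hG : Continuous fun a : ℝ =>
      ∫ b in (-1 : ℝ)..1, (-(|-a * z.1 + b * z.2| / ‖z‖) - (-|-a| - |b|)) :=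
    intervalIntegral.continuous_parametric_intervalIntegral_of_continuous' (by fun_prop) _ _
  have hρ_le : ρ ≤ ∫ a in (1 : ℝ)..1 + ρ,
      ∫ b in (-1 : ℝ)..1, (-(|-a * z.1 + b * z.2| / ‖z‖) - (-|-a| - |b|)) := by
    calc ρ = ∫ _ in (1 : ℝ)..1 + ρ, (1 : ℝ) := by simp
      _ ≤ _ := intervalIntegral.integral_mono_on (by linarith) intervalIntegrable_const
          (hG.intervalIntegrable _ _) fun a ha => one_le_integral_slice_gap z ha.1
  rw [ge_iff_le, div_mul_eq_mul_div, one_mul, div_le_div_iff₀ two_pos (by positivity)]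
  linarith

theorem stmt_15 (ρ : ℝ) (hρ : 0 < ρ) (z : ℝ × ℝ)
    (hz : z ∈ Set.Icc ((-1 : ℝ), (-1 : ℝ)) (1, 1))
    (X : Set (ℝ × ℝ)) (hX : X = Set.Icc ((-1 : ℝ), (-1 : ℝ)) (1, 1))
    (L : Set (ℝ × ℝ)) (hL : L = {x : ℝ × ℝ | ∃ l : ℝ, x = l • z}) :
    (1 / (2 * ρ)) *
        ∫ a in Set.Ioo (1 : ℝ) (1 + ρ), ∫ b in Set.Ioo (-1 : ℝ) 1,
          (sInf ((fun x : ℝ × ℝ => -a * x.1 + b * x.2) '' (X ∩ L)) -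
            sInf ((fun x : ℝ × ℝ => -a * x.1 + b * x.2) '' X))
      ≥ 1 / 2 :=
  stmt_15_general ρ hρ z X hX L hL
end
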